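/- Let K(x,y) = -|x-y| on R^d and let X = (x_1, …, x_n) be distinct points with n ≥ 2. Let K_X be the n×n matrix with entries K(x_i, x_j), and let 1 = (1,…,1) ∈ R^n. Then for every Y ∈ R^n there exists a unique pair (γ, α) ∈ R^n × R with Σ_i γ_i = 0 such that Y = K_X γ + α·1; equivalently, the map (γ, α) ↦ K_X γ + α 1 from {γ : Σγ_i = 0} × R to R^n is a linear isomorphism. -/

import Mathlib

/-!
For zero-sum weights `γ` the energy `∑ γᵢ γⱼ ‖xᵢ - xⱼ‖` is negative unless `γ = 0`. On the line,
`|a - b| = ∫ (𝟙[a ≤ t] - 𝟙[b ≤ t])² dt` turns the energy into `-2 ∫ (∑ γᵢ 𝟙[aᵢ ≤ t])² dt`, and for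
distinct nodes the step function `∑ γᵢ 𝟙[aᵢ ≤ t]` is a nonzero constant just to the right of the
smallest node carrying weight. In higher dimension, `𝔼 |⟪u, ω⟫| = c ‖u‖` for a standard Gaussian
`ω`, so the energy is `c⁻¹` times the average of the energies of the projections `⟪xᵢ, ω⟫`, which
are distinct for almost every `ω`.

Hence `γ ↦ γᵀ K_X γ` vanishes on the zero-sum hyperplane only at `0`, which makes the bordered
system `(γ, α) ↦ (K_X γ + α 𝟙, ∑ γᵢ)` injective, hence bijective.
-/

open MeasureTheory ProbabilityTheory Set Matrix
open scoped RealInnerProductSpace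

theorem sum_sum_mul_mul_sub_sq_of_sum_eq_zero {R ι : Type*} [CommRing R] [Fintype ι]
    (γ u : ι → R) (hγ : ∑ i, γ i = 0) :
    ∑ i, ∑ j, γ i * γ j * (u i - u j) ^ 2 = -2 * (∑ i, γ i * u i) ^ 2 := by
  calc ∑ i, ∑ j, γ i * γ j * (u i - u j) ^ 2
      = (∑ i, γ i * u i ^ 2) * ∑ j, γ j + (∑ i, γ i) * (∑ j, γ j * u j ^ 2)
          - 2 * (∑ i, γ i * u i) * ∑ j, γ j * u j := by
        simp only [Finset.sum_mul, Finset.mul_sum, ← Finset.sum_add_distrib,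
          ← Finset.sum_sub_distrib]
        exact Finset.sum_congr rfl fun i _ => Finset.sum_congr rfl fun j _ => by ring
    _ = -2 * (∑ i, γ i * u i) ^ 2 := by rw [hγ]; ring

theorem integral_neg_of_ae_neg {α : Type*} [MeasurableSpace α] {μ : Measure α} [NeZero μ]
    {f : α → ℝ} (hfi : Integrable f μ) (hf : ∀ᵐ x ∂μ, f x < 0) : ∫ x, f x ∂μ < 0 := by
  refine (integral_nonpos_of_ae (hf.mono fun x hx => hx.le)).lt_of_ne fun h0 => ?_
  have hzero : -f =ᵐ[μ] 0 := (integral_eq_zero_iff_of_nonneg_ae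
    (hf.mono fun x hx => (neg_pos.2 hx).le) hfi.neg).1 (by simp [integral_neg, h0])
  obtain ⟨x, hx, hx0⟩ := (hf.and hzero).exists
  simp only [Pi.neg_apply, Pi.zero_apply, neg_eq_zero] at hx0
  exact hx.ne hx0

section OneDimensional

theorem sq_indicator_Ici_sub_indicator_Ici {a b : ℝ} (hab : a ≤ b) (t : ℝ) :
    ((Ici a).indicator 1 t - (Ici b).indicator 1 t : ℝ) ^ 2 = (Ico a b).indicator 1 t := by
  by_cases hb : b ≤ t
  · simp [Set.indicator, hab.trans hb, hb]
  · by_cases ha : a ≤ t <;> simp [Set.indicator, ha, hb]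

theorem integrable_sq_indicator_Ici_sub_indicator_Ici (a b : ℝ) :
    Integrable fun t => ((Ici a).indicator 1 t - (Ici b).indicator 1 t : ℝ) ^ 2 := by
  wlog hab : a ≤ b generalizing a b
  · convert this b a (le_of_not_ge hab) using 2 with t
    ring
  simp only [sq_indicator_Ici_sub_indicator_Ici hab]
  exact (integrable_indicator_iff measurableSet_Ico).2 (integrableOn_const measure_Ico_lt_top.ne)

theorem integral_sq_indicator_Ici_sub_indicator_Ici (a b : ℝ) :
    ∫ t, ((Ici a).indicator 1 t - (Ici b).indicator 1 t : ℝ) ^ 2 = |a - b| := by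
  wlog hab : a ≤ b generalizing a b
  · rw [abs_sub_comm, ← this b a (le_of_not_ge hab)]
    congr with t
    ring
  simp only [sq_indicator_Ici_sub_indicator_Ici hab]
  rw [integral_indicator_one measurableSet_Ico, Real.volume_real_Ico_of_le hab, abs_sub_comm,
    abs_of_nonneg (sub_nonneg.2 hab)]

variable {ι : Type*} [Fintype ι] {γ : ι → ℝ}

theorem sum_sum_mul_mul_abs_sub_eq_integral (a : ι → ℝ) :
    ∑ i, ∑ j, γ i * γ j * |a i - a j| =
      ∫ t, ∑ i, ∑ j, γ i * γ j * ((Ici (a i)).indicator 1 t - (Ici (a j)).indicator 1 t) ^ 2 := by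
  have hint := fun i j => integrable_sq_indicator_Ici_sub_indicator_Ici (a i) (a j)
  rw [integral_finsetSum _ fun i _ => integrable_finsetSum _ fun j _ => (hint i j).const_mul _]
  simp_rw [integral_finsetSum _ fun j _ => (hint _ j).const_mul _, integral_const_mul,
    integral_sq_indicator_Ici_sub_indicator_Ici]

theorem integrable_sq_sum_mul_indicator_Ici (a : ι → ℝ) (hγ : ∑ i, γ i = 0) :
    Integrable fun t => (∑ i, γ i * (Ici (a i)).indicator 1 t) ^ 2 := by
  have hint := fun i j => integrable_sq_indicator_Ici_sub_indicator_Ici (a i) (a j)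
  have hsum := integrable_finsetSum Finset.univ fun i _ => integrable_finsetSum Finset.univ
    fun j _ => (hint i j).const_mul (γ i * γ j)
  refine (hsum.const_mul (-1 / 2)).congr (ae_of_all _ fun t => ?_)
  simp only [sum_sum_mul_mul_sub_sq_of_sum_eq_zero γ _ hγ]
  ring

theorem sum_sum_mul_mul_abs_sub_eq_neg_two_mul_integral (a : ι → ℝ) (hγ : ∑ i, γ i = 0) :
    ∑ i, ∑ j, γ i * γ j * |a i - a j| =
      -2 * ∫ t, (∑ i, γ i * (Ici (a i)).indicator 1 t) ^ 2 := by
  simp only [sum_sum_mul_mul_abs_sub_eq_integral, sum_sum_mul_mul_sub_sq_of_sum_eq_zero γ _ hγ,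
    integral_const_mul]

-- Take the smallest node `a i` with `γ i ≠ 0` and `δ` below its gap to the next node.
theorem exists_Ico_forall_sum_mul_indicator_Ici_eq {a : ι → ℝ} (ha : Function.Injective a)
    (hγ : γ ≠ 0) : ∃ s δ : ℝ, 0 < δ ∧ ∃ c ≠ 0,
      ∀ t ∈ Ico s (s + δ), ∑ i, γ i * (Ici (a i)).indicator 1 t = c := by
  obtain ⟨i₀, hi₀⟩ := Function.ne_iff.1 hγ
  obtain ⟨i, hi, hmin⟩ :=
    (Finset.univ.filter (γ · ≠ 0)).exists_min_image a ⟨i₀, by simpa using hi₀⟩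
  simp only [Finset.mem_filter_univ] at hi hmin
  have hgap : ∀ᶠ δ in nhdsWithin 0 (Ioi 0), δ ∈ Ioi 0 ∧ ∀ j, a j ≤ a i ∨ a i + δ ≤ a j := by
    refine eventually_mem_nhdsWithin.and (Filter.eventually_all.2 fun j => ?_)
    rcases le_or_gt (a j) (a i) with hj | hj
    · exact Filter.Eventually.of_forall fun _ => Or.inl hj
    · exact ((eventually_lt_nhds (sub_pos.2 hj)).filter_mono nhdsWithin_le_nhds).mono
        fun δ hδ => Or.inr (by linarith)
  obtain ⟨δ, hδ, hsep⟩ := hgap.exists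
  refine ⟨a i, δ, hδ, γ i, hi, fun t ht => ?_⟩
  rw [Finset.sum_eq_single i]
  · simp [ht.1]
  · intro j _ hji
    rcases (hsep j).imp_left (lt_of_le_of_ne · (ha.ne hji)) with hj | hj
    · have : γ j = 0 := by
        by_contra hγj
        exact (hmin j hγj).not_gt hj
      simp [this]
    · simp [not_le.2 (ht.2.trans_le hj)]
  · simp

theorem sum_sum_mul_mul_abs_sub_neg {a : ι → ℝ} (ha : Function.Injective a)
    (hγ : ∑ i, γ i = 0) (hγ₀ : γ ≠ 0) : ∑ i, ∑ j, γ i * γ j * |a i - a j| < 0 := by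
  obtain ⟨s, δ, hδ, c, hc, hF⟩ := exists_Ico_forall_sum_mul_indicator_Ici_eq ha hγ₀
  have hpos : 0 < ∫ t, (∑ i, γ i * (Ici (a i)).indicator 1 t) ^ 2 := by
    rw [integral_pos_iff_support_of_nonneg (fun t => sq_nonneg _)
      (integrable_sq_sum_mul_indicator_Ici a hγ)]
    calc (0 : ENNReal) < volume (Ico s (s + δ)) := by simpa [Real.volume_Ico] using hδ
      _ ≤ _ := measure_mono fun t ht => by simp [hF t ht, hc]
  rw [sum_sum_mul_mul_abs_sub_eq_neg_two_mul_integral a hγ]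
  linarith

end OneDimensional

section Gaussian

variable {E : Type*} [NormedAddCommGroup E] [InnerProductSpace ℝ E] [FiniteDimensional ℝ E]
  [MeasurableSpace E] [BorelSpace E]

theorem map_inner_stdGaussian (u : E) :
    (stdGaussian E).map (fun ω => ⟪u, ω⟫) = (gaussianReal 0 1).map (‖u‖ * ·) := by
  have h := IsGaussian.map_eq_gaussianReal (μ := stdGaussian E) (innerSL ℝ u)
  rw [integral_strongDual_stdGaussian, variance_dual_stdGaussian, innerSL_apply_norm] at h
  rw [gaussianReal_map_const_mul]
  convert h using 2 <;> simp [Real.toNNReal_of_nonneg (sq_nonneg _)]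

theorem integral_abs_inner_stdGaussian (u : E) :
    ∫ ω, |⟪u, ω⟫| ∂stdGaussian E = ‖u‖ * ∫ t, |t| ∂gaussianReal 0 1 := by
  rw [← integral_map (f := fun t => |t|) (by fun_prop) (by fun_prop), map_inner_stdGaussian,
    integral_map (by fun_prop) (by fun_prop)]
  simp [abs_mul, integral_const_mul]

theorem integrable_abs_inner_stdGaussian (u : E) :
    Integrable (fun ω => |⟪u, ω⟫|) (stdGaussian E) :=
  (IsGaussian.integrable_dual _ (innerSL ℝ u)).abs

theorem ae_inner_ne_zero_stdGaussian {u : E} (hu : u ≠ 0) :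
    ∀ᵐ ω ∂stdGaussian E, ⟪u, ω⟫ ≠ 0 := by
  have := nullSingletonClass_gaussianReal (μ := 0) one_ne_zero
  have hzero : (‖u‖ * ·) ⁻¹' {0} = ({0} : Set ℝ) := by ext; simp [norm_ne_zero_iff.2 hu]
  rw [ae_iff]
  simp only [ne_eq, not_not]
  change stdGaussian E ((fun ω => ⟪u, ω⟫) ⁻¹' {0}) = 0
  rw [← Measure.map_apply (by fun_prop) (MeasurableSet.singleton 0), map_inner_stdGaussian,
    Measure.map_apply (by fun_prop) (MeasurableSet.singleton 0), hzero, measure_singleton]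

theorem ae_injective_inner_stdGaussian {ι : Type*} [Finite ι] {x : ι → E}
    (hx : Function.Injective x) : ∀ᵐ ω ∂stdGaussian E, Function.Injective fun i => ⟪x i, ω⟫ := by
  have hsep : ∀ᵐ ω ∂stdGaussian E, ∀ i j, i ≠ j → ⟪x i - x j, ω⟫ ≠ 0 :=
    ae_all_iff.2 fun i => ae_all_iff.2 fun j => by
      by_cases hij : i = j
      · exact ae_of_all _ fun _ h => (h hij).elim
      · exact (ae_inner_ne_zero_stdGaussian (sub_ne_zero.2 (hx.ne hij))).mono fun _ h _ => h
  filter_upwards [hsep] with ω hω i j hij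
  by_contra hne
  exact hω i j hne (by rw [inner_sub_left]; exact sub_eq_zero.2 hij)

theorem sum_sum_mul_mul_dist_neg {ι : Type*} [Fintype ι] {x : ι → E} (hx : Function.Injective x)
    {γ : ι → ℝ} (hγ : ∑ i, γ i = 0) (hγ₀ : γ ≠ 0) :
    ∑ i, ∑ j, γ i * γ j * dist (x i) (x j) < 0 := by
  have hint := fun i j =>
    (integrable_abs_inner_stdGaussian (E := E) (x i - x j)).const_mul (γ i * γ j)
  have hG : (∑ i, ∑ j, γ i * γ j * dist (x i) (x j)) * ∫ t, |t| ∂gaussianReal 0 1 =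
      ∫ ω, ∑ i, ∑ j, γ i * γ j * |⟪x i - x j, ω⟫| ∂stdGaussian E := by
    rw [integral_finsetSum _ fun i _ => integrable_finsetSum _ fun j _ => hint i j]
    simp_rw [integral_finsetSum _ fun j _ => hint _ j, integral_const_mul,
      integral_abs_inner_stdGaussian, dist_eq_norm, Finset.sum_mul, mul_assoc]
  have hGneg : ∫ ω, ∑ i, ∑ j, γ i * γ j * |⟪x i - x j, ω⟫| ∂stdGaussian E < 0 := by
    refine integral_neg_of_ae_neg (integrable_finsetSum _ fun i _ => integrable_finsetSum _
      fun j _ => hint i j) ?_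
    filter_upwards [ae_injective_inner_stdGaussian hx] with ω hω
    simpa only [inner_sub_left] using sum_sum_mul_mul_abs_sub_neg hω hγ hγ₀
  exact neg_of_mul_neg_left (hG ▸ hGneg) (integral_nonneg fun _ => abs_nonneg _)

end Gaussian

section Interpolation

variable {𝕜 ι : Type*} [Field 𝕜] [Fintype ι] (A : Matrix ι ι 𝕜)

/-- The bordered matrix `!![A, 𝟙; 𝟙ᵀ, 0]` of the interpolation system. -/
def borderedLin : (ι → 𝕜) × 𝕜 →ₗ[𝕜] (ι → 𝕜) × 𝕜 where
  toFun p := (A *ᵥ p.1 + fun _ => p.2, ∑ i, p.1 i)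
  map_add' p q := by
    ext <;> simp [mulVec_add, Finset.sum_add_distrib]; ring
  map_smul' c p := by
    ext <;> simp [mulVec_smul, Finset.mul_sum]

theorem injective_borderedLin [Nonempty ι]
    (hA : ∀ γ : ι → 𝕜, ∑ i, γ i = 0 → γ ⬝ᵥ (A *ᵥ γ) = 0 → γ = 0) :
    Function.Injective (borderedLin A) := by
  rw [← LinearMap.ker_eq_bot, LinearMap.ker_eq_bot']
  rintro ⟨γ, α⟩ h
  simp only [borderedLin, LinearMap.coe_mk, AddHom.coe_mk, Prod.mk_eq_zero] at h
  obtain ⟨hval, hsum⟩ := h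
  have hAγ : A *ᵥ γ = fun _ => -α := by
    ext i
    simpa [add_eq_zero_iff_eq_neg] using congrFun hval i
  have hγ : γ = 0 := hA γ hsum (by simp [hAγ, dotProduct, ← Finset.sum_mul, hsum])
  subst hγ
  inhabit ι
  simpa using congrFun hval default

theorem existsUnique_mulVec_add_const [Nonempty ι]
    (hA : ∀ γ : ι → 𝕜, ∑ i, γ i = 0 → γ ⬝ᵥ (A *ᵥ γ) = 0 → γ = 0) (Y : ι → 𝕜) :
    ∃! p : (ι → 𝕜) × 𝕜, (∑ i, p.1 i = 0) ∧ ∀ i, Y i = (A *ᵥ p.1) i + p.2 := by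
  have hinj := injective_borderedLin A hA
  refine (existsUnique_congr fun p => ?_).1 <| Function.Bijective.existsUnique
    ⟨hinj, LinearMap.injective_iff_surjective.1 hinj⟩ (Y, 0)
  simp [borderedLin, Prod.ext_iff, funext_iff, eq_comm, and_comm]

end Interpolation

/-- Interpolation parametrization for the Energy-Distance kernel with
`P = P_0`: for distinct points `x_1,…,x_n` (`n ≥ 2`), every `Y ∈ ℝ^n` is
uniquely written as `Y = K_X γ + α·1` with `Σ_i γ_i = 0`; i.e. the map
`(γ, α) ↦ K_X γ + α·1` from the zero-sum hyperplane times `ℝ` to `ℝ^n` is a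
linear isomorphism. -/
theorem ed_kernel_interpolation_parametrization (d n : ℕ) (hn : 2 ≤ n)
    (x : Fin n → EuclideanSpace ℝ (Fin d)) (hx : Function.Injective x)
    (Y : Fin n → ℝ) :
    ∃! p : (Fin n → ℝ) × ℝ,
      (∑ i, p.1 i = 0) ∧
      ∀ i, Y i = (∑ j, (-(dist (x i) (x j))) * p.1 j) + p.2 := by
  have : Nonempty (Fin n) := ⟨⟨0, by omega⟩⟩
  refine existsUnique_mulVec_add_const (of fun i j => -dist (x i) (x j)) (fun γ hγ hq => ?_) Y
  by_contra hγ₀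
  refine (sum_sum_mul_mul_dist_neg hx hγ hγ₀).ne ?_
  rw [← neg_eq_zero, ← hq]
  simp only [dotProduct, mulVec, of_apply, Finset.mul_sum, ← Finset.sum_neg_distrib]
  exact Finset.sum_congr rfl fun i _ => Finset.sum_congr rfl fun j _ => by ring
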